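/- arXiv:1706.06729 — 2 statements merged into one kernel-verified Lean document; each statement's English description precedes it below -/
import Mathlib

section
/- Let H ∈ (0,1), a ≥ 1, T > 0, and set t_a = arctanh(H/a). Let k : [0,T] → ℝ satisfy k(t) ≥ −a² for all t, and let f : [0,T] → ℝ be differentiable with f(0) = H and f′(t) = f(t)² + k(t) for all t ∈ [0,T]. Then f(t) ≥ a·tanh(t_a − a·t) for all t ∈ [0,T]. -/
open Real Set

/-- The inverse hyperbolic tangent. -/
noncomputable def arctanh (x : ℝ) : ℝ := Real.log ((1 + x) / (1 - x)) / 2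

/-!
The model solution `g(t) = a·tanh(t_a − a·t)` solves `g' = g² − a²` with `g(0) = H`,
so `φ = g − f` satisfies `φ(0) = 0` and `φ' ≤ g² − f² = (g + f)·φ`. Bounding `g + f`
above by `C` on the compact interval, `φ` can never reach the barrier `ε·e^{(C+1)(t − t₁)}`
from below, so `φ(t₁) ≤ ε` for every `ε > 0`.
-/

theorem Real.hasDerivAt_tanh (x : ℝ) : HasDerivAt tanh (1 - tanh x ^ 2) x := by
  have hcosh : cosh x ≠ 0 := (cosh_pos x).ne'
  have hquot := (hasDerivAt_sinh x).div (hasDerivAt_cosh x) hcosh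
  rw [show tanh = fun y => sinh y / cosh y from funext tanh_eq_sinh_div_cosh]
  refine hquot.congr_deriv ?_
  field_simp

theorem hasDerivAt_mul_tanh_sub_mul (a c t : ℝ) :
    HasDerivAt (fun s => a * tanh (c - a * s)) ((a * tanh (c - a * t)) ^ 2 + -a ^ 2) t := by
  have hlin : HasDerivAt (fun s => c - a * s) (-a) t := by
    simpa using ((hasDerivAt_id t).const_mul a).const_sub c
  refine (((hasDerivAt_tanh _).comp t hlin).const_mul a).congr_deriv ?_
  ring

theorem arctanh_eq_artanh {x : ℝ} (hx : x ∈ Icc (-1) 1) : arctanh x = artanh x := by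
  rw [arctanh, artanh_eq_half_log hx]
  ring

theorem tanh_arctanh {x : ℝ} (hx : x ∈ Ioo (-1) 1) : tanh (arctanh x) = x := by
  rw [arctanh_eq_artanh (Ioo_subset_Icc_self hx), tanh_artanh hx]

theorem nonpos_of_deriv_right_le_mul_self {φ φ' c : ℝ → ℝ} {a b C : ℝ}
    (hφ : ContinuousOn φ (Icc a b))
    (hφ' : ∀ x ∈ Ico a b, HasDerivWithinAt φ (φ' x) (Ici x) x) (ha : φ a ≤ 0)
    (hle : ∀ x ∈ Ico a b, φ' x ≤ c x * φ x) (hc : ∀ x ∈ Ico a b, c x ≤ C) :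
    ∀ x ∈ Icc a b, φ x ≤ 0 := by
  intro x hx
  refine le_of_forall_pos_le_add fun ε hε => ?_
  set K := C + 1
  set B : ℝ → ℝ := fun y => ε * exp (K * (y - x))
  have hB_pos : ∀ y, 0 < B y := fun y => by positivity
  have hB : ∀ y, HasDerivAt B (K * B y) y := fun y => by
    refine ((((hasDerivAt_id y).sub_const x).const_mul K).exp.const_mul ε).congr_deriv ?_
    simp only [B, id]
    ring
  have hbarrier := image_le_of_deriv_right_lt_deriv_boundary hφ hφ' (ha.trans (hB_pos a).le) hB
    fun y hy hφB => calc
      φ' y ≤ c y * φ y := hle y hy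
      _ ≤ C * φ y := mul_le_mul_of_nonneg_right (hc y hy) (hφB.symm ▸ hB_pos y).le
      _ < K * B y := by rw [hφB]; exact mul_lt_mul_of_pos_right (lt_add_one C) (hB_pos y)
  simpa [B] using hbarrier hx

theorem riccati_le_of_le {f g k m : ℝ → ℝ} {a b : ℝ}
    (hf : ∀ t ∈ Icc a b, HasDerivAt f (f t ^ 2 + k t) t)
    (hg : ∀ t ∈ Icc a b, HasDerivAt g (g t ^ 2 + m t) t)
    (hmk : ∀ t ∈ Icc a b, m t ≤ k t) (ha : g a ≤ f a) :
    ∀ t ∈ Icc a b, g t ≤ f t := by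
  have hf_cont : ContinuousOn f (Icc a b) := fun t ht => (hf t ht).continuousAt.continuousWithinAt
  have hg_cont : ContinuousOn g (Icc a b) := fun t ht => (hg t ht).continuousAt.continuousWithinAt
  obtain ⟨C, hC⟩ := isCompact_Icc.bddAbove_image (hg_cont.add hf_cont)
  have hφ := nonpos_of_deriv_right_le_mul_self (φ := fun t => g t - f t) (c := fun t => g t + f t)
    (hg_cont.sub hf_cont)
    (fun t ht => ((hg t (Ico_subset_Icc_self ht)).sub
      (hf t (Ico_subset_Icc_self ht))).hasDerivWithinAt)
    (sub_nonpos.2 ha) (fun t ht => by nlinarith [hmk t (Ico_subset_Icc_self ht)])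
    (fun t ht => hC (mem_image_of_mem _ (Ico_subset_Icc_self ht)))
  exact fun t ht => sub_nonpos.1 (hφ t ht)

theorem riccati_comparison_lower_general (H : ℝ) (hH0 : 0 < H) (hH1 : H < 1)
    (a : ℝ) (ha : 1 ≤ a) (T : ℝ)
    (ta : ℝ) (hta : ta = arctanh (H / a))
    (k : ℝ → ℝ) (hk : ∀ t ∈ Icc (0 : ℝ) T, -a ^ 2 ≤ k t)
    (f : ℝ → ℝ) (hf0 : f 0 = H)
    (hf' : ∀ t ∈ Icc (0 : ℝ) T, HasDerivAt f (f t ^ 2 + k t) t) :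
    ∀ t ∈ Icc (0 : ℝ) T, a * Real.tanh (ta - a * t) ≤ f t := by
  have ha0 : 0 < a := one_pos.trans_le ha
  have hHa : H / a ∈ Ioo (-1) 1 :=
    ⟨by linarith [div_pos hH0 ha0], (div_lt_one ha0).2 (hH1.trans_le ha)⟩
  refine riccati_le_of_le hf' (fun t _ => hasDerivAt_mul_tanh_sub_mul a ta t) hk ?_
  rw [hf0, hta, mul_zero, sub_zero, tanh_arctanh hHa, mul_div_cancel₀ H ha0.ne']

/-- Scalar Riccati comparison for `K ≥ −a²`: if `f(0) = H ∈ (0,1)` and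
`f' = f² + k` with `k ≥ −a²`, `a ≥ 1`, on `[0,T]`, then
`f(t) ≥ a·tanh(arctanh(H/a) − a·t)`. -/
theorem riccati_comparison_lower (H : ℝ) (hH0 : 0 < H) (hH1 : H < 1)
    (a : ℝ) (ha : 1 ≤ a) (T : ℝ) (hT : 0 < T)
    (ta : ℝ) (hta : ta = arctanh (H / a))
    (k : ℝ → ℝ) (hk : ∀ t ∈ Icc (0 : ℝ) T, -a ^ 2 ≤ k t)
    (f : ℝ → ℝ) (hf0 : f 0 = H)
    (hf' : ∀ t ∈ Icc (0 : ℝ) T, HasDerivAt f (f t ^ 2 + k t) t) :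
    ∀ t ∈ Icc (0 : ℝ) T, a * Real.tanh (ta - a * t) ≤ f t :=
  riccati_comparison_lower_general H hH0 hH1 a ha T ta hta k hk f hf0 hf'
end

section
/- Define w, u : [0,∞) → ℝ by w(t) = (−1 − (e^t − 1)²)/(e^t − t)² and u(t) = (e^t·(t − 2) + 2)/(e^t − t)². Then for every t ≥ 0 and every s ∈ [0,1], w(t) + s·u(t) ≤ −1. -/
open Real Set

/-!
Since `w t + s * u t` is affine in `s`, it suffices to treat `s = 0` and `s = 1`. After
multiplying by `(e^t - t)^2 > 0`, the case `s = 1` reduces to `t (t - e^t) ≤ 0`, and the case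
`s = 0` to `t^2 - 2 t e^t + 2 e^t - 2 ≤ 0`, which holds because this function vanishes at `0`
and has derivative `2 t (1 - e^t) ≤ 0`.
-/

lemma two_mul_exp_mul_one_sub_le {t : ℝ} (ht : 0 ≤ t) : 2 * exp t * (1 - t) ≤ 2 - t ^ 2 := by
  set f : ℝ → ℝ := fun x ↦ 2 * exp x * (1 - x) - 2 + x ^ 2
  have hf : ∀ x, HasDerivAt f (2 * x * (1 - exp x)) x := fun x ↦
    ((((hasDerivAt_exp x).const_mul 2).mul ((hasDerivAt_id' x).const_sub 1)).sub_const 2).add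
      (hasDerivAt_pow 2 x) |>.congr_deriv (by norm_num; ring)
  have hf_anti : Antitone f := by
    refine antitone_of_deriv_nonpos (fun x ↦ (hf x).differentiableAt) fun x ↦ ?_
    rw [(hf x).deriv]
    rcases le_total 0 x with hx | hx
    · nlinarith [one_le_exp hx]
    · nlinarith [exp_le_one_iff.2 hx]
  have hf_le := hf_anti ht
  simp only [f, exp_zero] at hf_le
  linarith

lemma add_mul_div_le_neg_one {a b d s : ℝ} (hd : 0 < d) (hs : s ∈ Icc (0 : ℝ) 1)
    (h₀ : a + d ≤ 0) (h₁ : a + b + d ≤ 0) : a / d + s * (b / d) ≤ -1 := by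
  rw [← mul_div_assoc, ← add_div, div_le_iff₀ hd]
  nlinarith [mul_nonneg hs.1 (neg_nonneg.2 h₁), mul_nonneg (sub_nonneg.2 hs.2) (neg_nonneg.2 h₀)]

lemma curvature_bound_numerator_at_s_zero {t : ℝ} (ht : 0 ≤ t) :
    -1 - (exp t - 1) ^ 2 + (exp t - t) ^ 2 ≤ 0 := by
  nlinarith [two_mul_exp_mul_one_sub_le ht]

lemma curvature_bound_numerator_at_s_one {t : ℝ} (ht : 0 ≤ t) :
    -1 - (exp t - 1) ^ 2 + (exp t * (t - 2) + 2) + (exp t - t) ^ 2 ≤ 0 := by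
  have ht_le : t ≤ exp t := by linarith [add_one_le_exp t]
  nlinarith [mul_nonneg ht (sub_nonneg.2 ht_le)]

/-- All sectional curvatures of the counterexample metric are at most `−1`:
with `w(t) = (−1 − (e^t − 1)²)/(e^t − t)²` and
`u(t) = (e^t·(t − 2) + 2)/(e^t − t)²`, one has `w(t) + s·u(t) ≤ −1` for every
`t ≥ 0` and `s ∈ [0,1]`. -/
theorem curvature_upper_bound
    (w u : ℝ → ℝ)
    (hw : ∀ t : ℝ, 0 ≤ t → w t = (-1 - (Real.exp t - 1) ^ 2) / (Real.exp t - t) ^ 2)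
    (hu : ∀ t : ℝ, 0 ≤ t → u t = (Real.exp t * (t - 2) + 2) / (Real.exp t - t) ^ 2) :
    ∀ t : ℝ, 0 ≤ t → ∀ s ∈ Icc (0 : ℝ) 1, w t + s * u t ≤ -1 := by
  intro t ht s hs
  have hd : 0 < (exp t - t) ^ 2 := by nlinarith [add_one_le_exp t]
  rw [hw t ht, hu t ht]
  exact add_mul_div_le_neg_one hd hs (curvature_bound_numerator_at_s_zero ht)
    (curvature_bound_numerator_at_s_one ht)
end
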